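/- Let ū and u be open-loop controls, μ̄ and μ solutions of the FPK equation for ū and for u respectively with the same initial law ϑ, and p̄ a bounded C^{1,2} function (with bounded ∂_t p̄, ∇_x p̄, ∇²_x p̄) satisfying ∂_s p̄_s(x) + ∇p̄_s(x)·f(s,x,ū(s)) + Tr(∇²p̄_s(x) D(s,x)) = 0 and p̄_T = ℓ. Assume that for almost every t ∈ I, ∫ ∇p̄_t(x)·f(t,x,u(t)) dμ_t(x) = min over υ ∈ U of ∫ ∇p̄_t(x)·f(t,x,υ) dμ_t(x). Then the descent property ∫ ℓ dμ_T ≤ ∫ ℓ dμ̄_T holds. -/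

import Mathlib

open MeasureTheory intervalIntegral

noncomputable section

/-- Euclidean space ℝⁿ. -/
abbrev Eu (n : ℕ) : Type := EuclideanSpace ℝ (Fin n)

/-- Laplacian of `φ` at `x`: the trace of the Hessian. -/
def lapl {n : ℕ} (φ : Eu n → ℝ) (x : Eu n) : ℝ :=
  ∑ i : Fin n, fderiv ℝ (fun y => fderiv ℝ φ y (EuclideanSpace.single i 1)) x
    (EuclideanSpace.single i 1)

/-- `η` is of class C^{1,2} (C¹ in time, C² in space) and bounded together with
`∂ₜη`, `∇ₓη` and `∇²ₓη`. -/
structure C12Bdd {n : ℕ} (η : ℝ → Eu n → ℝ) : Prop where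
  smooth_t : ∀ x, ContDiff ℝ 1 fun t => η t x
  smooth_x : ∀ t, ContDiff ℝ 2 (η t)
  bdd : ∃ C, ∀ t x, |η t x| ≤ C
  bdd_dt : ∃ C, ∀ t x, |deriv (fun s => η s x) t| ≤ C
  bdd_grad : ∃ C, ∀ t x, ‖gradient (η t) x‖ ≤ C
  bdd_hess : ∃ C, ∀ t x, ‖fderiv ℝ (fderiv ℝ (η t)) x‖ ≤ C

/-- `Tr(∇²φ(x) · D)`: the trace of the product of the Hessian of `φ` at `x` with the
matrix `D`. -/
def hessTr {n : ℕ} (φ : Eu n → ℝ) (x : Eu n) (D : Matrix (Fin n) (Fin n) ℝ) : ℝ :=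
  ∑ i : Fin n, ∑ j : Fin n,
    fderiv ℝ (fun y => fderiv ℝ φ y (EuclideanSpace.single j 1)) x
      (EuclideanSpace.single i 1) * D j i

/-- `μ : [0,T] → P(ℝⁿ)` is a (distributional) solution of the Fokker–Planck–Kolmogorov
equation for the open-loop control `u`, drift `f`, diffusion matrix `D`, with initial
law `ϑ`. -/
def IsFPKol {n m : ℕ} (T : ℝ) (f : ℝ → Eu n → Eu m → Eu n)
    (D : ℝ → Eu n → Matrix (Fin n) (Fin n) ℝ)
    (u : ℝ → Eu m) (ϑ : Measure (Eu n)) (μ : ℝ → Measure (Eu n)) : Prop :=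
  (∀ t, IsProbabilityMeasure (μ t)) ∧
  μ 0 = ϑ ∧
  (∀ φ : Eu n → ℝ, Continuous φ → (∃ C, ∀ x, |φ x| ≤ C) →
    Measurable fun t => ∫ x, φ x ∂μ t) ∧
  (∀ η : ℝ → Eu n → ℝ, C12Bdd η → ∀ t ∈ Set.Icc (0:ℝ) T,
    (∫ x, η t x ∂μ t) - (∫ x, η 0 x ∂μ 0) =
      ∫ s in (0:ℝ)..t, ∫ x, (deriv (fun r => η r x) s
        + (inner ℝ (gradient (η s) x) (f s x (u s)) : ℝ) + hessTr (η s) x (D s x)) ∂μ s)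

/-!
Test the FPK equations of `μ` and `μ̄` against the adjoint state `p̄`. Since `p̄` solves the
backward equation driven by `ū`, the generator term vanishes for `μ̄`, so
`∫ ℓ dμ̄_T = ∫ p̄_0 dϑ`. For `μ`, the generator of `p̄` under `u` differs from the one under `ū`
only by `⟨∇p̄, f(u) - f(ū)⟩`, whose `μ_t`-integral is `≤ 0` by the minimality of `u`; hence
`∫ ℓ dμ_T ≤ ∫ p̄_0 dϑ`.
-/

lemma integrable_inner_of_norm_le {X E : Type*} [MeasurableSpace X] [NormedAddCommGroup E]
    [InnerProductSpace ℝ E] {ν : Measure X} [IsFiniteMeasure ν] {G g : X → E} {a b : ℝ}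
    (hG : AEStronglyMeasurable G ν) (hg : AEStronglyMeasurable g ν)
    (hGa : ∀ x, ‖G x‖ ≤ a) (hgb : ∀ x, ‖g x‖ ≤ b) :
    Integrable (fun x => inner ℝ (G x) (g x)) ν :=
  Integrable.of_bound (hG.inner hg) (a * b) <| ae_of_all _ fun x =>
    (norm_inner_le_norm _ _).trans <|
      mul_le_mul (hGa x) (hgb x) (norm_nonneg _) ((norm_nonneg _).trans (hGa x))

lemma C12Bdd.continuous_gradient {n : ℕ} {η : ℝ → Eu n → ℝ} (hη : C12Bdd η) (t : ℝ) :
    Continuous (gradient (η t)) :=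
  (InnerProductSpace.toDual ℝ (Eu n)).symm.continuous.comp
    ((hη.smooth_x t).continuous_fderiv two_ne_zero)

variable {n m : ℕ}

def kolmogorovOperator (f : ℝ → Eu n → Eu m → Eu n) (D : ℝ → Eu n → Matrix (Fin n) (Fin n) ℝ)
    (u : ℝ → Eu m) (η : ℝ → Eu n → ℝ) (s : ℝ) (x : Eu n) : ℝ :=
  deriv (fun r => η r x) s + inner ℝ (gradient (η s) x) (f s x (u s)) + hessTr (η s) x (D s x)

lemma kolmogorovOperator_eq_add_inner_sub (f : ℝ → Eu n → Eu m → Eu n)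
    (D : ℝ → Eu n → Matrix (Fin n) (Fin n) ℝ) (u v : ℝ → Eu m) (η : ℝ → Eu n → ℝ) (s : ℝ)
    (x : Eu n) :
    kolmogorovOperator f D u η s x = kolmogorovOperator f D v η s x +
      (inner ℝ (gradient (η s) x) (f s x (u s)) - inner ℝ (gradient (η s) x) (f s x (v s))) := by
  unfold kolmogorovOperator
  ring

lemma integral_kolmogorovOperator_nonpos {f : ℝ → Eu n → Eu m → Eu n}
    {D : ℝ → Eu n → Matrix (Fin n) (Fin n) ℝ} {u v : ℝ → Eu m} {η : ℝ → Eu n → ℝ} {s : ℝ}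
    {ν : Measure (Eu n)} (hv : ∀ x, kolmogorovOperator f D v η s x = 0)
    (hu_int : Integrable (fun x => inner ℝ (gradient (η s) x) (f s x (u s))) ν)
    (hv_int : Integrable (fun x => inner ℝ (gradient (η s) x) (f s x (v s))) ν)
    (hle : ∫ x, inner ℝ (gradient (η s) x) (f s x (u s)) ∂ν ≤
      ∫ x, inner ℝ (gradient (η s) x) (f s x (v s)) ∂ν) :
    ∫ x, kolmogorovOperator f D u η s x ∂ν ≤ 0 := by
  simp_rw [kolmogorovOperator_eq_add_inner_sub f D u v, hv, zero_add]
  rw [integral_sub hu_int hv_int]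
  linarith

namespace IsFPKol

variable {T : ℝ} {f : ℝ → Eu n → Eu m → Eu n} {D : ℝ → Eu n → Matrix (Fin n) (Fin n) ℝ}
  {u : ℝ → Eu m} {ϑ : Measure (Eu n)} {μ : ℝ → Measure (Eu n)} {η : ℝ → Eu n → ℝ}

lemma integral_sub_integral_initial (hμ : IsFPKol T f D u ϑ μ) (hη : C12Bdd η) {t : ℝ}
    (ht : t ∈ Set.Icc 0 T) :
    ∫ x, η t x ∂μ t - ∫ x, η 0 x ∂ϑ =
      ∫ s in 0..t, ∫ x, kolmogorovOperator f D u η s x ∂μ s := by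
  rw [← hμ.2.1]
  exact hμ.2.2.2 η hη t ht

lemma integral_terminal_eq_of_kolmogorovOperator_eq_zero (hμ : IsFPKol T f D u ϑ μ)
    (hη : C12Bdd η) (hT : 0 ≤ T)
    (h0 : ∀ s ∈ Set.Icc 0 T, ∀ x, kolmogorovOperator f D u η s x = 0) :
    ∫ x, η T x ∂μ T = ∫ x, η 0 x ∂ϑ := by
  have hId := hμ.integral_sub_integral_initial hη ⟨hT, le_rfl⟩
  have hzero : ∫ s in 0..T, ∫ x, kolmogorovOperator f D u η s x ∂μ s = 0 := by
    refine (integral_congr fun s hs => ?_).trans integral_zero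
    rw [Set.uIcc_of_le hT] at hs
    simp only [h0 s hs, integral_zero]
  linarith

lemma integral_terminal_le_of_integral_kolmogorovOperator_nonpos (hμ : IsFPKol T f D u ϑ μ)
    (hη : C12Bdd η) (hT : 0 ≤ T)
    (hneg : ∀ᵐ s ∂volume.restrict (Set.Icc 0 T), ∫ x, kolmogorovOperator f D u η s x ∂μ s ≤ 0) :
    ∫ x, η T x ∂μ T ≤ ∫ x, η 0 x ∂ϑ := by
  have hId := hμ.integral_sub_integral_initial hη ⟨hT, le_rfl⟩
  have hnonpos : ∫ s in 0..T, ∫ x, kolmogorovOperator f D u η s x ∂μ s ≤ 0 := by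
    rw [integral_of_le hT]
    exact integral_nonpos_of_ae (ae_restrict_of_ae_restrict_of_subset Set.Ioc_subset_Icc_self hneg)
  linarith

end IsFPKol

theorem descent_property_open_loop_general
    {n m : ℕ} (T : ℝ) (hT : 0 < T)
    (U : Set (Eu m))
    (f : ℝ → Eu n → Eu m → Eu n)
    (hfmeas : Measurable fun p : ℝ × Eu n × Eu m => f p.1 p.2.1 p.2.2)
    (hfbdd : ∃ C, ∀ t x υ, ‖f t x υ‖ ≤ C)
    (D : ℝ → Eu n → Matrix (Fin n) (Fin n) ℝ)
    (ℓ : Eu n → ℝ)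
    (ub : ℝ → Eu m) (hubU : ∀ t, ub t ∈ U)
    (u : ℝ → Eu m)
    (ϑ : Measure (Eu n)) (μb μ : ℝ → Measure (Eu n))
    (hFPKb : IsFPKol T f D ub ϑ μb) (hFPK : IsFPKol T f D u ϑ μ)
    (pb : ℝ → Eu n → ℝ) (hpb : C12Bdd pb)
    (hpde : ∀ s ∈ Set.Icc (0:ℝ) T, ∀ x : Eu n,
      deriv (fun r => pb r x) s + (inner ℝ (gradient (pb s) x) (f s x (ub s)) : ℝ)
        + hessTr (pb s) x (D s x) = 0)
    (hterm : ∀ x, pb T x = ℓ x)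
    (hmin : ∀ᵐ t ∂(volume.restrict (Set.Icc (0:ℝ) T)), ∀ υ ∈ U,
      (∫ x, (inner ℝ (gradient (pb t) x) (f t x (u t)) : ℝ) ∂μ t) ≤
        ∫ x, (inner ℝ (gradient (pb t) x) (f t x υ) : ℝ) ∂μ t) :
    (∫ x, ℓ x ∂μ T) ≤ ∫ x, ℓ x ∂μb T := by
  obtain ⟨Cf, hCf⟩ := hfbdd
  obtain ⟨Cg, hCg⟩ := hpb.bdd_grad
  have hint (s : ℝ) (υ : Eu m) :
      Integrable (fun x => inner ℝ (gradient (pb s) x) (f s x υ)) (μ s) :=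
    haveI := hFPK.1 s
    integrable_inner_of_norm_le (hpb.continuous_gradient s).aestronglyMeasurable
      (hfmeas.comp (measurable_const.prodMk (measurable_id.prodMk measurable_const))).aestronglyMeasurable (hCg s) (fun x => hCf s x υ)
  simp_rw [← hterm]
  calc ∫ x, pb T x ∂μ T ≤ ∫ x, pb 0 x ∂ϑ := by
        refine hFPK.integral_terminal_le_of_integral_kolmogorovOperator_nonpos hpb hT.le ?_
        filter_upwards [hmin, ae_restrict_mem measurableSet_Icc] with s hs hsT
        exact integral_kolmogorovOperator_nonpos (hpde s hsT) (hint s _) (hint s _)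
          (hs _ (hubU s))
    _ = ∫ x, pb T x ∂μb T :=
        (hFPKb.integral_terminal_eq_of_kolmogorovOperator_eq_zero hpb hT.le hpde).symm

theorem descent_property_open_loop
    {n m : ℕ} (hn : 1 ≤ n) (hm : 1 ≤ m) (T : ℝ) (hT : 0 < T)
    (U : Set (Eu m)) (hUne : U.Nonempty) (hUcp : IsCompact U)
    (f : ℝ → Eu n → Eu m → Eu n)
    (hfmeas : Measurable fun p : ℝ × Eu n × Eu m => f p.1 p.2.1 p.2.2)
    (hfbdd : ∃ C, ∀ t x υ, ‖f t x υ‖ ≤ C)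
    (D : ℝ → Eu n → Matrix (Fin n) (Fin n) ℝ)
    (hDcont : Continuous fun p : ℝ × Eu n => D p.1 p.2)
    (hDbdd : ∃ C, ∀ t x i j, |D t x i j| ≤ C)
    (hDpsd : ∀ t x, (D t x).PosSemidef) (hDsymm : ∀ t x, (D t x).IsSymm)
    (ℓ : Eu n → ℝ) (hℓ : ContDiff ℝ 2 ℓ) (hℓbdd : ∃ C, ∀ x, |ℓ x| ≤ C)
    (ub : ℝ → Eu m) (hubmeas : Measurable ub) (hubU : ∀ t, ub t ∈ U)
    (u : ℝ → Eu m) (humeas : Measurable u) (huU : ∀ t, u t ∈ U)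
    (ϑ : Measure (Eu n)) (μb μ : ℝ → Measure (Eu n))
    (hFPKb : IsFPKol T f D ub ϑ μb) (hFPK : IsFPKol T f D u ϑ μ)
    (pb : ℝ → Eu n → ℝ) (hpb : C12Bdd pb)
    (hpde : ∀ s ∈ Set.Icc (0:ℝ) T, ∀ x : Eu n,
      deriv (fun r => pb r x) s + (inner ℝ (gradient (pb s) x) (f s x (ub s)) : ℝ)
        + hessTr (pb s) x (D s x) = 0)
    (hterm : ∀ x, pb T x = ℓ x)
    (hmin : ∀ᵐ t ∂(volume.restrict (Set.Icc (0:ℝ) T)), ∀ υ ∈ U,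
      (∫ x, (inner ℝ (gradient (pb t) x) (f t x (u t)) : ℝ) ∂μ t) ≤
        ∫ x, (inner ℝ (gradient (pb t) x) (f t x υ) : ℝ) ∂μ t) :
    (∫ x, ℓ x ∂μ T) ≤ ∫ x, ℓ x ∂μb T :=
  descent_property_open_loop_general T hT U f hfmeas hfbdd D ℓ ub hubU u ϑ μb μ hFPKb hFPK pb hpb
    hpde hterm hmin
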